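/- arXiv:1204.1078 — 2 statements merged into one kernel-verified Lean document; each statement's English description precedes it below -/
import Mathlib

section
/- Let k be a nonnegative integer. Then there exist rational numbers a and b such that \sum_{n=1}^{\infty} n^k 2^n / \binom{2n}{n} = a + b \pi. -/
/-!
Write `β m = 2 ^ m / C(2m, m)` and `T k = ∑_{m ≥ 1} m ^ k β m`. The ratio identity
`(2m + 1) β (m + 1) = (m + 1) β m` gives
`2 T (k + 1) - T k = ∑_{m ≥ 0} (m + 1) ^ (k + 1) β m`, and expanding `(m + 1) ^ (k + 1)`
binomially expresses `T (k + 1)` as `1` plus an integer combination of `T 0, …, T k`;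
hence every `T k` lies in `ℚ + ℚ T 0`.
By the Beta integral `β m = (2m + 1) ∫₀¹ (2x(1 - x)) ^ m dx`; summing under the integral
gives `∑ β m = ∫₀¹ (1 + u) / (1 - u) ^ 2 dx` with `u = 2x(1 - x)`, which is `π / 2 + 2`;
thus `T 0 = π / 2 + 1`.
-/

open Finset MeasureTheory
open scoped Nat

theorem tsum_two_mul_add_one_mul_pow {𝕜 : Type*} [NormedField 𝕜] [CompleteSpace 𝕜]
    {u : 𝕜} (hu : ‖u‖ < 1) : ∑' m : ℕ, (2 * (m : 𝕜) + 1) * u ^ m = (1 + u) / (1 - u) ^ 2 := by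
  have hne : 1 - u ≠ 0 := sub_ne_zero.mpr (ne_of_apply_ne norm (by simpa using hu.ne'))
  calc ∑' m : ℕ, (2 * (m : 𝕜) + 1) * u ^ m = ∑' m : ℕ, (2 * (m * u ^ m) + u ^ m) :=
        tsum_congr fun m => by ring
    _ = 2 * (u / (1 - u) ^ 2) + (1 - u)⁻¹ :=
        (((hasSum_coe_mul_geometric_of_norm_lt_one hu).mul_left 2).add
          (hasSum_geometric_of_norm_lt_one hu)).tsum_eq
    _ = (1 + u) / (1 - u) ^ 2 := by field_simp; ring

theorem integral_pow_mul_one_sub_pow (a b : ℕ) :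
    ∫ x in (0 : ℝ)..1, x ^ a * (1 - x) ^ b = (a ! * b ! : ℝ) / (a + b + 1)! := by
  have hbeta := Complex.betaIntegral_eval_nat_add_one_right
    (u := (a : ℂ) + 1) (by simp; positivity) b
  have hprod : (a ! : ℂ) * ∏ j ∈ range (b + 1), ((a : ℂ) + 1 + j) = (a + b + 1)! := by
    rw [show a + b + 1 = a + (b + 1) by ring, ← Nat.factorial_mul_ascFactorial,
      Nat.ascFactorial_eq_prod_range]
    push_cast; ring_nf
  have hint : Complex.betaIntegral ((a : ℂ) + 1) ((b : ℂ) + 1)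
      = ((∫ x in (0 : ℝ)..1, x ^ a * (1 - x) ^ b : ℝ) : ℂ) := by
    rw [Complex.betaIntegral, ← intervalIntegral.integral_ofReal]
    refine intervalIntegral.integral_congr fun x _ => ?_
    simp only [add_sub_cancel_right, Complex.cpow_natCast]
    push_cast; rfl
  have hfac : (a ! : ℂ) ≠ 0 := by exact_mod_cast a.factorial_ne_zero
  apply Complex.ofReal_injective
  rw [← hint, hbeta]
  push_cast
  rw [← hprod, mul_div_mul_left _ _ hfac]

noncomputable def twoPowDivCentralBinom (m : ℕ) : ℝ := 2 ^ m / m.centralBinom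

local notation "β" => twoPowDivCentralBinom

theorem centralBinom_cast_pos (m : ℕ) : (0 : ℝ) < m.centralBinom := by
  exact_mod_cast m.centralBinom_pos

theorem twoPowDivCentralBinom_zero : β 0 = 1 := by simp [twoPowDivCentralBinom]

theorem twoPowDivCentralBinom_nonneg (m : ℕ) : 0 ≤ β m := by
  unfold twoPowDivCentralBinom; positivity

theorem two_mul_add_one_mul_twoPowDivCentralBinom_succ (m : ℕ) :
    (2 * m + 1) * β (m + 1) = (m + 1) * β m := by
  have h : ((m + 1) * (m + 1).centralBinom : ℝ) = 2 * (2 * m + 1) * m.centralBinom := by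
    exact_mod_cast Nat.succ_mul_centralBinom_succ m
  have h0 := (centralBinom_cast_pos m).ne'
  have h1 := (centralBinom_cast_pos (m + 1)).ne'
  unfold twoPowDivCentralBinom
  field_simp
  linear_combination -(2 : ℝ) ^ m * h

theorem twoPowDivCentralBinom_le (m : ℕ) : β m ≤ (2 * m + 1) * (1 / 2) ^ m := by
  have h : ((4 : ℝ) ^ m) ≤ (2 * m + 1) * m.centralBinom := by
    rw [Nat.centralBinom_eq_two_mul_choose]
    exact_mod_cast Nat.four_pow_le_two_mul_add_one_mul_central_binom m
  unfold twoPowDivCentralBinom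
  rw [div_le_iff₀ (centralBinom_cast_pos m)]
  calc (2 : ℝ) ^ m = (1 / 2) ^ m * 4 ^ m := by rw [← mul_pow]; norm_num
    _ ≤ (1 / 2) ^ m * ((2 * m + 1) * m.centralBinom) := by gcongr
    _ = (2 * m + 1) * (1 / 2) ^ m * m.centralBinom := by ring

theorem summable_pow_mul_twoPowDivCentralBinom (k : ℕ) :
    Summable fun m : ℕ => (m : ℝ) ^ k * β m := by
  have hhalf : ‖(1 / 2 : ℝ)‖ < 1 := by norm_num
  have hbound : Summable fun m : ℕ =>
      2 * ((m : ℝ) ^ (k + 1) * (1 / 2) ^ m) + (m : ℝ) ^ k * (1 / 2) ^ m :=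
    ((summable_pow_mul_geometric_of_norm_lt_one (k + 1) hhalf).mul_left 2).add
      (summable_pow_mul_geometric_of_norm_lt_one k hhalf)
  refine hbound.of_nonneg_of_le (fun m => by have := twoPowDivCentralBinom_nonneg m; positivity)
    fun m => ?_
  calc (m : ℝ) ^ k * β m ≤ (m : ℝ) ^ k * ((2 * m + 1) * (1 / 2) ^ m) := by
        gcongr; exact twoPowDivCentralBinom_le m
    _ = _ := by ring

noncomputable def momentSum (k : ℕ) : ℝ := ∑' m : ℕ, ((m : ℝ) + 1) ^ k * β (m + 1)

theorem summable_moment (k : ℕ) : Summable fun m : ℕ => ((m : ℝ) + 1) ^ k * β (m + 1) := by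
  simpa using (summable_nat_add_iff 1).mpr (summable_pow_mul_twoPowDivCentralBinom k)

theorem two_mul_momentSum_succ_sub (j : ℕ) :
    2 * momentSum (j + 1) - momentSum j
      = 1 + ∑ i ∈ range (j + 2), ((j + 1).choose i : ℝ) * momentSum i := by
  have hterm (m : ℕ) :
      2 * (((m : ℝ) + 1) ^ (j + 1) * β (m + 1)) - ((m : ℝ) + 1) ^ j * β (m + 1)
        = ((m : ℝ) + 1) ^ (j + 1) * β m := by
    linear_combination ((m : ℝ) + 1) ^ j * two_mul_add_one_mul_twoPowDivCentralBinom_succ m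
  have hsum2 := (summable_moment (j + 1)).mul_left 2
  have hbinom (m : ℕ) : (((m + 1 : ℕ) : ℝ) + 1) ^ (j + 1) * β (m + 1)
      = ∑ i ∈ range (j + 2), ((j + 1).choose i : ℝ) * (((m : ℝ) + 1) ^ i * β (m + 1)) := by
    rw [Nat.cast_succ, add_pow, sum_mul]
    exact sum_congr rfl fun i _ => by ring
  calc 2 * momentSum (j + 1) - momentSum j = ∑' m : ℕ, ((m : ℝ) + 1) ^ (j + 1) * β m := by
        rw [momentSum, momentSum, ← tsum_mul_left, ← hsum2.tsum_sub (summable_moment j)]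
        exact tsum_congr hterm
    _ = 1 + ∑' m : ℕ, (((m + 1 : ℕ) : ℝ) + 1) ^ (j + 1) * β (m + 1) := by
        rw [((hsum2.sub (summable_moment j)).congr hterm).tsum_eq_zero_add]
        simp [twoPowDivCentralBinom_zero]
    _ = 1 + ∑ i ∈ range (j + 2), ((j + 1).choose i : ℝ) * momentSum i := by
        rw [tsum_congr hbinom, Summable.tsum_finsetSum fun i _ => (summable_moment i).mul_left _]
        simp only [momentSum, tsum_mul_left]

theorem momentSum_mem_span (k : ℕ) :
    momentSum k ∈ Submodule.span ℚ ({1, momentSum 0} : Set ℝ) := by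
  induction k using Nat.strong_induction_on with
  | _ k ih =>
    rcases k with _ | j
    · exact Submodule.subset_span (by simp)
    have hrec : momentSum (j + 1)
        = 1 + momentSum j + ∑ i ∈ range (j + 1), ((j + 1).choose i : ℚ) • momentSum i := by
      have := two_mul_momentSum_succ_sub j
      rw [sum_range_succ, Nat.choose_self, Nat.cast_one, one_mul] at this
      simp only [Rat.cast_natCast, Rat.smul_def]
      linarith
    rw [hrec]
    refine add_mem (add_mem (Submodule.subset_span (by simp)) (ih j (by omega)))
      (Submodule.sum_mem _ fun i hi => Submodule.smul_mem _ _ (ih i (by simp at hi; omega)))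

theorem integral_two_mul_add_one_mul_pow (m : ℕ) :
    ∫ x in (0 : ℝ)..1, (2 * (m : ℝ) + 1) * (2 * x * (1 - x)) ^ m = β m := by
  have hcb : (m.centralBinom * m ! * m ! : ℝ) = (m + m)! := by
    have h := Nat.choose_mul_factorial_mul_factorial (Nat.le_add_left m m)
    rw [Nat.add_sub_cancel] at h
    rw [Nat.centralBinom_eq_two_mul_choose, two_mul]
    exact_mod_cast h
  have hfac : ((m + m + 1)! : ℝ) = (2 * m + 1) * (m + m)! := by
    push_cast [Nat.factorial_succ]; ring
  simp_rw [mul_pow, mul_assoc, intervalIntegral.integral_const_mul,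
    integral_pow_mul_one_sub_pow]
  have := centralBinom_cast_pos m
  rw [twoPowDivCentralBinom, hfac, ← hcb]
  field_simp

theorem integral_one_add_div_one_sub_sq :
    ∫ x in (0 : ℝ)..1, (1 + 2 * x * (1 - x)) / (1 - 2 * x * (1 - x)) ^ 2 = Real.pi / 2 + 2 := by
  have hpos (x : ℝ) : 0 < 1 - 2 * x * (1 - x) := by nlinarith [sq_nonneg (2 * x - 1)]
  have hderiv (x : ℝ) : HasDerivAt
      (fun x => Real.arctan (2 * x - 1) + 2 * (2 * x - 1) / (1 + (2 * x - 1) ^ 2))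
      ((1 + 2 * x * (1 - x)) / (1 - 2 * x * (1 - x)) ^ 2) x := by
    have hlin : HasDerivAt (fun x : ℝ => 2 * x - 1) 2 x := by
      simpa using ((hasDerivAt_id x).const_mul 2).sub_const 1
    have hden : 1 + (2 * x - 1) ^ 2 ≠ 0 := by positivity
    have hquot := (hlin.const_mul 2).div ((hlin.fun_pow 2).const_add 1) hden
    refine (hlin.arctan.add hquot).congr_deriv ?_
    have := (hpos x).ne'
    field_simp
    ring
  rw [intervalIntegral.integral_eq_sub_of_hasDerivAt (fun x _ => hderiv x)
    ((Continuous.div (by fun_prop) (by fun_prop)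
      fun x => pow_ne_zero 2 (hpos x).ne').intervalIntegrable 0 1)]
  norm_num [Real.arctan_one, Real.arctan_neg]
  ring

theorem tsum_twoPowDivCentralBinom : ∑' m : ℕ, β m = Real.pi / 2 + 2 := by
  set f : ℕ → ℝ → ℝ := fun m x => (2 * (m : ℝ) + 1) * (2 * x * (1 - x)) ^ m
  have hu {x : ℝ} (hx : x ∈ Set.Ioc (0 : ℝ) 1) :
      0 ≤ 2 * x * (1 - x) ∧ 2 * x * (1 - x) < 1 := by
    obtain ⟨h0, h1⟩ := hx
    constructor <;> nlinarith [sq_nonneg (2 * x - 1)]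
  have hint (m : ℕ) : ∫ x in Set.Ioc (0 : ℝ) 1, f m x = β m := by
    rw [← intervalIntegral.integral_of_le zero_le_one]
    exact integral_two_mul_add_one_mul_pow m
  have hnorm (m : ℕ) : ∫ x in Set.Ioc (0 : ℝ) 1, ‖f m x‖ = β m := by
    rw [← hint]
    refine setIntegral_congr_fun measurableSet_Ioc fun x hx => Real.norm_of_nonneg ?_
    have := (hu hx).1
    positivity
  have hintegrable (m : ℕ) : IntegrableOn (f m) (Set.Ioc 0 1) :=
    (Continuous.intervalIntegrable (by fun_prop) 0 1).1
  calc ∑' m : ℕ, β m = ∑' m : ℕ, ∫ x in Set.Ioc (0 : ℝ) 1, f m x :=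
        tsum_congr fun m => (hint m).symm
    _ = ∫ x in Set.Ioc (0 : ℝ) 1, ∑' m : ℕ, f m x :=
        integral_tsum_of_summable_integral_norm hintegrable
          (by simpa only [hnorm] using summable_pow_mul_twoPowDivCentralBinom 0 |>.congr (by simp))
    _ = ∫ x in Set.Ioc (0 : ℝ) 1, (1 + 2 * x * (1 - x)) / (1 - 2 * x * (1 - x)) ^ 2 := by
        refine setIntegral_congr_fun measurableSet_Ioc fun x hx => ?_
        obtain ⟨h0, h1⟩ := hu hx
        exact tsum_two_mul_add_one_mul_pow (by rwa [Real.norm_of_nonneg h0])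
    _ = Real.pi / 2 + 2 := by
        rw [← intervalIntegral.integral_of_le zero_le_one, integral_one_add_div_one_sub_sq]

theorem momentSum_zero : momentSum 0 = Real.pi / 2 + 1 := by
  have h := (summable_pow_mul_twoPowDivCentralBinom 0).tsum_eq_zero_add
  simp only [pow_zero, one_mul, twoPowDivCentralBinom_zero, tsum_twoPowDivCentralBinom] at h
  simp only [momentSum, pow_zero, one_mul]
  linarith

theorem apery_series_two_eq_rat_add_rat_mul_pi (k : ℕ) :
    ∃ a b : ℚ,
      (∑' n : ℕ, ((n : ℝ) + 1) ^ k * (2 : ℝ) ^ (n + 1) /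
          (Nat.choose (2 * (n + 1)) (n + 1))) = (a : ℝ) + (b : ℝ) * Real.pi := by
  obtain ⟨a, b, hab⟩ := Submodule.mem_span_pair.mp (momentSum_mem_span k)
  refine ⟨a + b, b / 2, ?_⟩
  have hseries : (∑' n : ℕ, ((n : ℝ) + 1) ^ k * (2 : ℝ) ^ (n + 1) /
      (Nat.choose (2 * (n + 1)) (n + 1))) = momentSum k :=
    tsum_congr fun n => by
      rw [twoPowDivCentralBinom, Nat.centralBinom_eq_two_mul_choose, mul_div_assoc]
  rw [hseries, ← hab, momentSum_zero, Rat.smul_def, Rat.smul_def]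
  push_cast
  ring
end

section
/- Let z be a real number with 0 < z < 4. Then \sum_{n=1}^{\infty} z^n / \binom{2n}{n} = \frac{z}{4-z} + \frac{4\sqrt{z}}{(4-z)^{3/2}} \arcsin(\sqrt{z}/2). -/
/-!
Integrating `(1 - u²)ⁿ` over `[-1, 1]` by parts gives `(2n + 3) J_{n+1} = (2n + 2) J_n`, which
matches the recurrence of the central binomial coefficients and yields
`z^(n+1) / C(2n+2, n+1) = ∫ (n + 1) (z/4)^(n+1) (1 - u²)ⁿ du`. Summing under the integral sign
(the terms are dominated by `(n + 1) |z/4|^(n+1)`) leaves the rational integral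
`∫_{-1}^{1} 4z / (4 - z + z u²)² du`, evaluated by an explicit antiderivative. With
`a = √(4 - z)` and `b = √z` we have `a² + b² = 4`, so `arctan (b / a) = arcsin (b / 2)`.
-/

open Real intervalIntegral

theorem integral_one_sub_sq_pow_succ (n : ℕ) :
    (2 * n + 3 : ℝ) * ∫ u in (-1 : ℝ)..1, (1 - u ^ 2) ^ (n + 1) =
      (2 * n + 2) * ∫ u in (-1 : ℝ)..1, (1 - u ^ 2) ^ n := by
  have hderiv : ∀ u ∈ Set.uIcc (-1 : ℝ) 1, HasDerivAt (fun u : ℝ => u * (1 - u ^ 2) ^ (n + 1))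
      ((2 * n + 3) * (1 - u ^ 2) ^ (n + 1) - (2 * n + 2) * (1 - u ^ 2) ^ n) u := by
    intro u _
    refine ((hasDerivAt_id' u).mul
      (((hasDerivAt_pow 2 u).const_sub 1).fun_pow (n + 1))).congr_deriv ?_
    push_cast
    ring
  have hFTC := integral_eq_sub_of_hasDerivAt hderiv
    (Continuous.intervalIntegrable (by fun_prop) _ _)
  rw [integral_sub, integral_const_mul, integral_const_mul] at hFTC
  · norm_num at hFTC
    linarith
  all_goals exact Continuous.intervalIntegrable (by fun_prop) _ _

theorem centralBinom_mul_integral_one_sub_sq_pow (n : ℕ) :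
    (2 * n + 1 : ℝ) * n.centralBinom * ∫ u in (-1 : ℝ)..1, (1 - u ^ 2) ^ n = 2 * 4 ^ n := by
  induction n with
  | zero => norm_num
  | succ n ih =>
    have hC : ((n + 1 : ℕ) : ℝ) * (n + 1).centralBinom = 2 * (2 * n + 1) * n.centralBinom := by
      exact_mod_cast Nat.succ_mul_centralBinom_succ n
    push_cast at hC ⊢
    linear_combination ((n + 1).centralBinom : ℝ) * integral_one_sub_sq_pow_succ n
      + 2 * (∫ u in (-1 : ℝ)..1, (1 - u ^ 2) ^ n) * hC + 4 * ih

theorem integral_succ_mul_pow_mul_one_sub_sq_pow (z : ℝ) (n : ℕ) :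
    ∫ u in (-1 : ℝ)..1, (n + 1) * (z / 4) ^ (n + 1) * (1 - u ^ 2) ^ n =
      z ^ (n + 1) / (2 * (n + 1)).choose (n + 1) := by
  have hC : ((n + 1 : ℕ) : ℝ) * (n + 1).centralBinom = 2 * (2 * n + 1) * n.centralBinom := by
    exact_mod_cast Nat.succ_mul_centralBinom_succ n
  have hC0 : ((n + 1).centralBinom : ℝ) ≠ 0 := by exact_mod_cast Nat.centralBinom_ne_zero _
  rw [integral_const_mul, ← Nat.centralBinom_eq_two_mul_choose, eq_div_iff hC0, div_pow]
  push_cast at hC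
  field_simp
  linear_combination z ^ (n + 1) * (∫ u in (-1 : ℝ)..1, (1 - u ^ 2) ^ n) * hC
    + 2 * z ^ (n + 1) * centralBinom_mul_integral_one_sub_sq_pow n

theorem hasSum_succ_mul_pow_mul_one_sub_sq_pow {z u : ℝ} (hz : |z| < 4) (hu : |u| ≤ 1) :
    HasSum (fun n : ℕ => (n + 1) * (z / 4) ^ (n + 1) * (1 - u ^ 2) ^ n)
      (4 * z / (4 - z + z * u ^ 2) ^ 2) := by
  have hu2 : 0 ≤ 1 - u ^ 2 ∧ 1 - u ^ 2 ≤ 1 :=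
    ⟨by nlinarith [abs_le.1 hu, sq_abs u], by nlinarith⟩
  have hr : ‖z / 4 * (1 - u ^ 2)‖ < 1 := by
    rw [norm_mul, Real.norm_of_nonneg hu2.1, norm_div, Real.norm_eq_abs, Real.norm_ofNat]
    calc |z| / 4 * (1 - u ^ 2) ≤ |z| / 4 * 1 := by gcongr; exact hu2.2
      _ < 1 := by linarith
  have hq : 4 - z + z * u ^ 2 ≠ 0 := by
    have : z * (1 - u ^ 2) < 4 := by nlinarith [abs_lt.1 hz, le_abs_self z]
    linarith
  have h := (hasSum_choose_mul_geometric_of_norm_lt_one 1 hr).mul_left (z / 4)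
  rw [show 1 - z / 4 * (1 - u ^ 2) = (4 - z + z * u ^ 2) / 4 by ring] at h
  rw [show 4 * z / (4 - z + z * u ^ 2) ^ 2 = z / 4 * (1 / ((4 - z + z * u ^ 2) / 4) ^ (1 + 1)) by
    field_simp; ring]
  refine h.congr_fun fun n => ?_
  rw [Nat.choose_one_right, mul_pow]
  push_cast
  ring

theorem hasSum_pow_succ_div_choose {z : ℝ} (hz : |z| < 4) :
    HasSum (fun n : ℕ => z ^ (n + 1) / (2 * (n + 1)).choose (n + 1))
      (∫ u in (-1 : ℝ)..1, 4 * z / (4 - z + z * u ^ 2) ^ 2) := by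
  have hbound : Summable fun n : ℕ => (n + 1) * |z / 4| ^ (n + 1) := by
    have hr : ‖|z / 4|‖ < 1 := by rw [norm_abs_eq_norm, norm_div, Real.norm_eq_abs, Real.norm_ofNat]; linarith
    simpa [Nat.choose_one_right, pow_succ, mul_assoc] using
      (summable_choose_mul_geometric_of_norm_lt_one 1 hr).mul_right |z / 4|
  simp_rw [← integral_succ_mul_pow_mul_one_sub_sq_pow]
  refine hasSum_integral_of_dominated_convergence (fun n _ => (n + 1) * |z / 4| ^ (n + 1))
    (fun n => Continuous.aestronglyMeasurable (by fun_prop)) (fun n => .of_forall fun u hu => ?_)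
    (.of_forall fun _ _ => hbound) intervalIntegrable_const
    (.of_forall fun u hu => hasSum_succ_mul_pow_mul_one_sub_sq_pow hz ?_)
  all_goals rw [Set.uIoc_of_le (by norm_num)] at hu
  · have h1 : ‖1 - u ^ 2‖ ≤ 1 := by
      rw [Real.norm_eq_abs, abs_le]; constructor <;> nlinarith [hu.1, hu.2]
    calc ‖(n + 1) * (z / 4) ^ (n + 1) * (1 - u ^ 2) ^ n‖
        = (n + 1) * |z / 4| ^ (n + 1) * ‖1 - u ^ 2‖ ^ n := by
          rw [norm_mul, norm_mul, norm_pow, norm_pow, Real.norm_eq_abs (z / 4)]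
          norm_cast
      _ ≤ (n + 1) * |z / 4| ^ (n + 1) * 1 := by gcongr; exact pow_le_one₀ (norm_nonneg _) h1
      _ = (n + 1) * |z / 4| ^ (n + 1) := mul_one _
  · exact abs_le.2 ⟨hu.1.le, hu.2⟩

theorem integral_inv_sq_add_sq_mul_sq_sq {a b : ℝ} (ha : a ≠ 0) (hb : b ≠ 0) :
    ∫ u in (-1 : ℝ)..1, ((a ^ 2 + b ^ 2 * u ^ 2) ^ 2)⁻¹ =
      (a ^ 2 * (a ^ 2 + b ^ 2))⁻¹ + arctan (b / a) / (a ^ 3 * b) := by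
  have hpos : ∀ u : ℝ, 0 < a ^ 2 + b ^ 2 * u ^ 2 := fun u => by positivity
  have hderiv : ∀ u ∈ Set.uIcc (-1 : ℝ) 1, HasDerivAt
      (fun u => u / (2 * a ^ 2 * (a ^ 2 + b ^ 2 * u ^ 2)) + arctan (b * u / a) / (2 * a ^ 3 * b))
      ((a ^ 2 + b ^ 2 * u ^ 2) ^ 2)⁻¹ u := by
    intro u _
    have hq : HasDerivAt (fun u => 2 * a ^ 2 * (a ^ 2 + b ^ 2 * u ^ 2))
        (2 * a ^ 2 * (b ^ 2 * (2 * u))) u := by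
      simpa using
        (((hasDerivAt_pow 2 u).const_mul (b ^ 2)).const_add (a ^ 2)).const_mul (2 * a ^ 2)
    have hl : HasDerivAt (fun u => b * u / a) (b / a) u := by
      simpa using ((hasDerivAt_id' u).const_mul b).div_const a
    refine (((hasDerivAt_id' u).div hq (by have := hpos u; positivity)).add
      (hl.arctan.div_const (2 * a ^ 3 * b))).congr_deriv ?_
    have := (hpos u).ne'
    field_simp
    ring
  rw [integral_eq_sub_of_hasDerivAt hderiv (Continuous.intervalIntegrable
    (by fun_prop (disch := exact fun u => (pow_pos (hpos u) 2).ne')) _ _)]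
  simp only [mul_one, mul_neg_one, neg_div, arctan_neg, one_pow, neg_one_sq]
  field_simp
  ring

theorem inverse_central_binomial_sum (z : ℝ) (hz0 : 0 < z) (hz4 : z < 4) :
    (∑' n : ℕ, z ^ (n + 1) / (Nat.choose (2 * (n + 1)) (n + 1))) =
      z / (4 - z) +
        4 * Real.sqrt z / (4 - z) ^ ((3 : ℝ) / 2) * Real.arcsin (Real.sqrt z / 2) := by
  set a := √(4 - z) with ha_def
  set b := √z
  have ha : a ^ 2 = 4 - z := sq_sqrt (by linarith)
  have hb : b ^ 2 = z := sq_sqrt hz0.le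
  have ha0 : 0 < a := sqrt_pos.2 (by linarith)
  have hb0 : 0 < b := sqrt_pos.2 hz0
  have hab : a ^ 2 + b ^ 2 = 4 := by rw [ha, hb]; ring
  have hpow : (4 - z) ^ ((3 : ℝ) / 2) = a ^ 3 := by
    rw [ha_def, sqrt_eq_rpow, ← rpow_natCast, ← rpow_mul (by linarith)]
    norm_num
  have harcsin : arcsin (b / 2) = arctan (b / a) := by
    have hb2 : b < 2 := by nlinarith
    rw [arcsin_eq_arctan ⟨by linarith, by linarith⟩,
      show 1 - (b / 2) ^ 2 = (a / 2) ^ 2 by linear_combination -hab / 4, sqrt_sq (by positivity)]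
    field_simp
  have hintegrand : (fun u : ℝ => 4 * z / (4 - z + z * u ^ 2) ^ 2) =
      fun u => 4 * b ^ 2 * ((a ^ 2 + b ^ 2 * u ^ 2) ^ 2)⁻¹ := by
    rw [ha, hb]
    rfl
  rw [(hasSum_pow_succ_div_choose (abs_lt.2 ⟨by linarith, hz4⟩)).tsum_eq, hintegrand,
    integral_const_mul, integral_inv_sq_add_sq_mul_sq_sq ha0.ne' hb0.ne', hpow, harcsin,
    ← ha, ← hb, hab]
  field_simp
end
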